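/- arXiv:1302.7128 — 2 statements merged into one kernel-verified Lean document; each statement's English description precedes it below -/
import Mathlib

section
/- For fixed t > 0 and z > 0, the function x ↦ q_x(t,x,z)/q(t,x,z) is (strictly) decreasing on (0,∞). -/
/-!
Since `(x + z)² = (x - z)² + 4xz`, the second Gaussian in `q` is the first one times `e^{-2zx/t}`,
so the logarithmic derivative of `x ↦ q(t, x, z)` splits as `(z - x)/t + (2z/t) / (e^{2zx/t} - 1)`.
Both summands are strictly decreasing in `x > 0`.
-/

open Real Set

noncomputable def q (t x y : ℝ) : ℝ :=
  (Real.sqrt (2 * Real.pi * t))⁻¹ *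
    (Real.exp (-(x - y) ^ 2 / (2 * t)) - Real.exp (-(x + y) ^ 2 / (2 * t)))

lemma hasDerivAt_neg_add_sq_div (t c x : ℝ) (ht : t ≠ 0) :
    HasDerivAt (fun x' : ℝ => -(x' + c) ^ 2 / (2 * t)) (-(x + c) / t) x := by
  refine ((((hasDerivAt_id' x).add_const c).pow 2).neg.div_const (2 * t)).congr_deriv ?_
  field_simp
  ring

lemma hasDerivAt_q (t z x : ℝ) (ht : t ≠ 0) :
    HasDerivAt (fun x' => q t x' z)
      ((√(2 * π * t))⁻¹ *
        (-(x - z) / t * exp (-(x - z) ^ 2 / (2 * t)) +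
          (x + z) / t * exp (-(x + z) ^ 2 / (2 * t)))) x := by
  have hsub := hasDerivAt_neg_add_sq_div t (-z) x ht
  simp only [← sub_eq_add_neg] at hsub
  refine ((hsub.exp.sub (hasDerivAt_neg_add_sq_div t z x ht).exp).const_mul _).congr_deriv ?_
  ring

lemma exp_neg_sq_add_div (t x z : ℝ) :
    exp (-(x + z) ^ 2 / (2 * t)) = exp (-(x - z) ^ 2 / (2 * t)) / exp (2 * z / t * x) := by
  rw [← exp_sub]
  ring_nf

lemma deriv_q_div_q (t z x : ℝ) (ht : 0 < t) (hz : z ≠ 0) (hx : x ≠ 0) :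
    deriv (fun x' => q t x' z) x / q t x z
      = (z - x) / t + (2 * z / t) / (exp (2 * z / t * x) - 1) := by
  have hc : (√(2 * π * t))⁻¹ ≠ 0 := inv_ne_zero (sqrt_pos.mpr (by positivity)).ne'
  have he : exp (2 * z / t * x) - 1 ≠ 0 := by
    rw [sub_ne_zero, Ne, exp_eq_one_iff]; positivity
  rw [(hasDerivAt_q t z x ht.ne').deriv, q, exp_neg_sq_add_div]
  have he₀ := exp_pos (2 * z / t * x)
  generalize exp (2 * z / t * x) = e at he he₀ ⊢
  field_simp
  ring

lemma strictAntiOn_div_exp_sub_one {a b : ℝ} (ha : 0 < a) (hb : 0 < b) :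
    StrictAntiOn (fun x => a / (exp (b * x) - 1)) (Ioi 0) := by
  intro x hx y _ hxy
  have hpos : 0 < exp (b * x) - 1 := sub_pos.mpr (one_lt_exp_iff.mpr (mul_pos hb hx))
  have hlt : exp (b * x) - 1 < exp (b * y) - 1 := by gcongr
  exact div_lt_div_of_pos_left ha hpos hlt

theorem stmt_2 (t z : ℝ) (ht : 0 < t) (hz : 0 < z) :
    StrictAntiOn (fun x => deriv (fun x' => q t x' z) x / q t x z) (Set.Ioi (0 : ℝ)) := by
  have hlin : StrictAnti fun x : ℝ => (z - x) / t :=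
    fun _ _ hxy => div_lt_div_of_pos_right (by linarith) ht
  have hexp := strictAntiOn_div_exp_sub_one (a := 2 * z / t) (b := 2 * z / t)
    (by positivity) (by positivity)
  refine ((hlin.strictAntiOn _).add hexp).congr fun x hx => ?_
  exact (deriv_q_div_q t z x ht hz.ne' (ne_of_gt hx)).symm
end

section
/- For every t > 0 and a > 0, the partial derivative of H with respect to t satisfies H_t(t,a) = -ℓ(t,a), where H(t,a) = ∫₀^∞ q(t,a,y) dy. -/
open Real Set MeasureTheory

noncomputable def ℓ (t a : ℝ) : ℝ :=
  a / Real.sqrt (2 * Real.pi * t ^ 3) * Real.exp (-a ^ 2 / (2 * t))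

noncomputable def H (t a : ℝ) : ℝ := ∫ y in Set.Ioi (0 : ℝ), q t a y

/-!
The heat kernel `q` has an explicit antiderivative in `y` in terms of the Gaussian primitive
`G s = ∫₀ˢ exp (-u²/2)`, namely `(2π)^{-1/2} (G ((y - a)/√t) - G ((y + a)/√t))`. Evaluating it
at `0` and `∞` (where both terms have the same limit, so they cancel) and using that `G` is odd gives
`H t a = 2 (2π)^{-1/2} G (a/√t)`, and the chain rule in `t` produces `-ℓ t a`.
-/

open Filter Topology

noncomputable def gaussPrimitive (s : ℝ) : ℝ := ∫ u in (0 : ℝ)..s, exp (-u ^ 2 / 2)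

lemma hasDerivAt_gaussPrimitive (s : ℝ) :
    HasDerivAt gaussPrimitive (exp (-s ^ 2 / 2)) s := by
  have hc : Continuous fun u : ℝ => exp (-u ^ 2 / 2) := by fun_prop
  exact intervalIntegral.integral_hasDerivAt_right
    (hc.intervalIntegrable _ _) (hc.stronglyMeasurableAtFilter _ _) hc.continuousAt

lemma gaussPrimitive_neg (s : ℝ) : gaussPrimitive (-s) = -gaussPrimitive s := by
  have h := intervalIntegral.integral_comp_neg (a := 0) (b := s) fun u : ℝ => exp (-u ^ 2 / 2)
  simp only [neg_sq, neg_zero] at h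
  rw [gaussPrimitive, intervalIntegral.integral_symm, ← h, ← gaussPrimitive]

lemma integrable_exp_neg_add_sq_div {t : ℝ} (ht : 0 < t) (c : ℝ) :
    Integrable fun y : ℝ => exp (-(c + y) ^ 2 / (2 * t)) := by
  refine ((integrable_exp_neg_mul_sq (b := (2 * t)⁻¹) (by positivity)).comp_add_left c).congr
    (.of_forall fun y => ?_)
  field_simp

lemma exists_tendsto_gaussPrimitive_atTop : ∃ L : ℝ, Tendsto gaussPrimitive atTop (𝓝 L) := by
  have hint : IntegrableOn (fun u : ℝ => exp (-u ^ 2 / 2)) (Ioi 0) := by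
    simpa [mul_comm] using (integrable_exp_neg_add_sq_div one_pos 0).integrableOn
  exact ⟨_, intervalIntegral_tendsto_integral_Ioi 0 hint tendsto_id⟩

lemma integrable_q {t : ℝ} (ht : 0 < t) (a : ℝ) : Integrable (q t a) := by
  refine (((integrable_exp_neg_add_sq_div ht (-a)).sub
    (integrable_exp_neg_add_sq_div ht a)).const_mul (√(2 * π * t))⁻¹).congr
    (.of_forall fun y => ?_)
  simp only [q, Pi.sub_apply]
  ring_nf

lemma hasDerivAt_gaussPrimitive_add_div_sqrt {t : ℝ} (ht : 0 < t) (c y : ℝ) :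
    HasDerivAt (fun y => gaussPrimitive ((y + c) / √t))
      ((√t)⁻¹ * exp (-(y + c) ^ 2 / (2 * t))) y := by
  have hlin : HasDerivAt (fun y : ℝ => (y + c) / √t) (√t)⁻¹ y := by
    simpa [div_eq_mul_inv] using ((hasDerivAt_id y).add_const c).div_const √t
  refine ((hasDerivAt_gaussPrimitive _).comp y hlin).congr_deriv ?_
  rw [mul_comm, div_pow, sq_sqrt ht.le]
  ring_nf

lemma hasDerivAt_q_primitive {t : ℝ} (ht : 0 < t) (a y : ℝ) :
    HasDerivAt
      (fun y => (√(2 * π))⁻¹ * (gaussPrimitive ((y + -a) / √t) - gaussPrimitive ((y + a) / √t)))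
      (q t a y) y := by
  refine (((hasDerivAt_gaussPrimitive_add_div_sqrt ht (-a) y).sub
    (hasDerivAt_gaussPrimitive_add_div_sqrt ht a y)).const_mul (√(2 * π))⁻¹).congr_deriv ?_
  rw [q, sqrt_mul (x := 2 * π) (by positivity) t]
  ring_nf

lemma H_eq_gaussPrimitive {t : ℝ} (ht : 0 < t) (a : ℝ) :
    H t a = 2 * (√(2 * π))⁻¹ * gaussPrimitive (a / √t) := by
  obtain ⟨L, hL⟩ := exists_tendsto_gaussPrimitive_atTop
  have hs : 0 < √t := sqrt_pos.2 ht
  have htop (c : ℝ) : Tendsto (fun y : ℝ => (y + c) / √t) atTop atTop :=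
    (tendsto_atTop_add_const_right atTop c tendsto_id).atTop_div_const hs
  have hlim : Tendsto
      (fun y => (√(2 * π))⁻¹ * (gaussPrimitive ((y + -a) / √t) - gaussPrimitive ((y + a) / √t)))
      atTop (𝓝 0) := by
    simpa using ((hL.comp (htop (-a))).sub (hL.comp (htop a))).const_mul (√(2 * π))⁻¹
  rw [H, integral_Ioi_of_hasDerivAt_of_tendsto' (fun y _ => hasDerivAt_q_primitive ht a y)
    (integrable_q ht a).integrableOn hlim]
  simp only [zero_add, neg_div, gaussPrimitive_neg]
  ring

lemma hasDerivAt_H {t : ℝ} (ht : 0 < t) (a : ℝ) :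
    HasDerivAt (fun t' => H t' a) (-ℓ t a) t := by
  have hs : 0 < √t := sqrt_pos.2 ht
  have hs2 : √t ^ 2 = t := sq_sqrt ht.le
  have heq : (fun t' => 2 * (√(2 * π))⁻¹ * gaussPrimitive (a / √t')) =ᶠ[𝓝 t] fun t' => H t' a := by
    filter_upwards [Ioi_mem_nhds ht] with t' ht'
    exact (H_eq_gaussPrimitive ht' a).symm
  have hinner : HasDerivAt (fun t' => a / √t') (a * (-(1 / (2 * √t)) / √t ^ 2)) t := by
    simpa [div_eq_mul_inv] using ((hasDerivAt_sqrt ht.ne').inv hs.ne').const_mul a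
  refine (((hasDerivAt_gaussPrimitive _).comp t hinner).const_mul
    (2 * (√(2 * π))⁻¹)).congr_of_eventuallyEq heq.symm |>.congr_deriv ?_
  have hsqrt3 : √(2 * π * t ^ 3) = √(2 * π) * (t * √t) := by
    rw [sqrt_mul (by positivity), show t ^ 3 = (t * √t) ^ 2 by rw [mul_pow, hs2]; ring,
      sqrt_sq (by positivity)]
  have hpi : 0 < √(2 * π) := sqrt_pos.2 (by positivity)
  rw [ℓ, hsqrt3, div_pow, hs2]
  field_simp

theorem stmt_7_general (t a : ℝ) (ht : 0 < t) :
    deriv (fun t' => H t' a) t = -ℓ t a :=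
  (hasDerivAt_H ht a).deriv

theorem stmt_7 (t a : ℝ) (ht : 0 < t) (ha : 0 < a) :
    deriv (fun t' => H t' a) t = -ℓ t a :=
  stmt_7_general t a ht
end
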